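/- arXiv:1909.06036 — 4 statements merged into one kernel-verified Lean document; each statement's English description precedes it below -/
import Mathlib

section
/- Let Q be a probability measure on Ω = ℝ₊^T under which each coordinate S_t is integrable. Then S is a Q-martingale (with respect to the canonical filtration) if and only if A^1_T(Q) = 0, i.e., if and only if E_Q[(Δ·S)_T] ≤ 0 for every strategy Δ with each |Δ_t| ≤ 1. -/
open MeasureTheory Filter Topology

noncomputable def gain (T : ℕ) (Δ : ℕ → (Fin T → ℝ) → ℝ) (x : Fin T → ℝ) : ℝ :=
  ∑ i ∈ Finset.range (T - 1),
    if h : i + 1 < T then Δ i x * (x ⟨i + 1, h⟩ - x ⟨i, Nat.lt_of_succ_lt h⟩) else 0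

def IsStrategy (T : ℕ) (N : ℝ) (Δ : ℕ → (Fin T → ℝ) → ℝ) : Prop :=
  ∀ i, Measurable (Δ i) ∧ (∀ x, |Δ i x| ≤ N) ∧
    ∀ x y : Fin T → ℝ, (∀ j : Fin T, (j : ℕ) ≤ i → x j = y j) → Δ i x = Δ i y

/-- The canonical filtration `F_i = σ(S_0,…,S_i)` on the path space. -/
def canonicalFiltration (T : ℕ) (i : ℕ) : MeasurableSpace (Fin T → ℝ) :=
  ⨆ j : {j : Fin T // (j : ℕ) ≤ i}, MeasurableSpace.comap (fun x => x j.1) inferInstance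

/-- restriction map -/
def restr (T i : ℕ) (x : Fin T → ℝ) : {j : Fin T // (j : ℕ) ≤ i} → ℝ := fun j => x j.1

lemma canon_eq (T i : ℕ) :
    canonicalFiltration T i = MeasurableSpace.comap (restr T i) inferInstance := by
  show _ = MeasurableSpace.comap (restr T i) MeasurableSpace.pi
  rw [MeasurableSpace.pi, MeasurableSpace.comap_iSup]
  simp only [MeasurableSpace.comap_comp]
  rfl

lemma canon_le (T i : ℕ) : canonicalFiltration T i ≤ (inferInstance : MeasurableSpace (Fin T → ℝ)) := by
  rw [canon_eq]
  exact Measurable.comap_le (measurable_pi_lambda _ (fun j => measurable_pi_apply j.1))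

lemma coord_meas (T i : ℕ) (j : Fin T) (hj : (j : ℕ) ≤ i) :
    Measurable[canonicalFiltration T i] (fun x : Fin T → ℝ => x j) := by
  rw [canon_eq]
  have h1 : Measurable[MeasurableSpace.comap (restr T i) inferInstance] (restr T i) :=
    comap_measurable _
  exact (measurable_pi_apply (⟨j, hj⟩ : {j : Fin T // (j : ℕ) ≤ i})).comp h1

/-- extension map -/
noncomputable def extnd (T i : ℕ) (y : {j : Fin T // (j : ℕ) ≤ i} → ℝ) : Fin T → ℝ :=
  fun j => if h : (j : ℕ) ≤ i then y ⟨j, h⟩ else 0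

lemma strategy_meas (T i : ℕ) (f : (Fin T → ℝ) → ℝ) (hf : Measurable f)
    (hdep : ∀ x y : Fin T → ℝ, (∀ j : Fin T, (j : ℕ) ≤ i → x j = y j) → f x = f y) :
    Measurable[canonicalFiltration T i] f := by
  have hext : Measurable (extnd T i) :=
    measurable_pi_lambda _ (fun j => by
      unfold extnd
      split
      · exact measurable_pi_apply _
      · exact measurable_const)
  have : f = (f ∘ extnd T i) ∘ restr T i := by
    funext x
    exact hdep x (extnd T i (restr T i x)) (fun j hj => by simp [extnd, restr, hj])
  rw [canon_eq, this]
  have h1 : Measurable[MeasurableSpace.comap (restr T i) inferInstance] (restr T i) :=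
    comap_measurable _
  exact Measurable.comp (hf.comp hext) h1

lemma set_invariant (T i : ℕ) {A : Set (Fin T → ℝ)}
    (hA : MeasurableSet[canonicalFiltration T i] A) {x y : Fin T → ℝ}
    (hxy : ∀ j : Fin T, (j : ℕ) ≤ i → x j = y j) : x ∈ A ↔ y ∈ A := by
  rw [canon_eq] at hA
  obtain ⟨B, -, rfl⟩ := hA
  have : restr T i x = restr T i y := funext fun j => hxy j.1 j.2
  simp only [Set.mem_preimage]
  rw [this]

/-- `S` is a `Q`-martingale w.r.t. the canonical filtration iff
`E_Q[(Δ·S)_T] ≤ 0` for every strategy `Δ` with `|Δ_t| ≤ 1`. -/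
theorem stmt1 (T : ℕ) (hT : 2 ≤ T)
    (Q : Measure (Fin T → ℝ)) [IsProbabilityMeasure Q]
    (hQ : ∀ᵐ x ∂Q, ∀ t, 0 ≤ x t)
    (hint : ∀ t : Fin T, Integrable (fun x => x t) Q) :
    (∀ i : ℕ, ∀ h : i + 1 < T,
        Q[fun x => x ⟨i + 1, h⟩ | canonicalFiltration T i]
          =ᵐ[Q] fun x => x ⟨i, Nat.lt_of_succ_lt h⟩)
      ↔ (∀ Δ, IsStrategy T 1 Δ → ∫ x, gain T Δ x ∂Q ≤ 0) := by
  constructor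
  · -- martingale ⇒ all gains have nonpositive expectation
    intro hmart Δ hΔ
    have hsplit : ∫ x, gain T Δ x ∂Q
        = ∑ i ∈ Finset.range (T - 1), ∫ x,
            (if h : i + 1 < T then
              Δ i x * (x ⟨i + 1, h⟩ - x ⟨i, Nat.lt_of_succ_lt h⟩) else 0) ∂Q := by
      unfold gain
      rw [integral_finset_sum]
      intro i _
      split_ifs with h
      · exact ((hint _).sub (hint _)).bdd_mul (hΔ i).1.aestronglyMeasurable
          (ae_of_all _ fun x => by simpa [Real.norm_eq_abs] using (hΔ i).2.1 x)
      · exact integrable_zero _ _ _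
    rw [hsplit]
    refine le_of_eq (Finset.sum_eq_zero fun i _ => ?_)
    split_ifs with h
    swap
    · simp
    have hm : canonicalFiltration T i ≤ MeasurableSpace.pi := canon_le T i
    haveI : SigmaFinite (Q.trim hm) := inferInstance
    have hdiff : Integrable (fun x : Fin T → ℝ =>
        x ⟨i + 1, h⟩ - x ⟨i, Nat.lt_of_succ_lt h⟩) Q := (hint _).sub (hint _)
    have hsm : StronglyMeasurable[canonicalFiltration T i] (Δ i) :=
      (strategy_meas T i _ (hΔ i).1 (hΔ i).2.2).stronglyMeasurable
    have hmul : Integrable (Δ i * fun x : Fin T → ℝ =>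
        x ⟨i + 1, h⟩ - x ⟨i, Nat.lt_of_succ_lt h⟩) Q :=
      hdiff.bdd_mul (hΔ i).1.aestronglyMeasurable
        (ae_of_all _ fun x => by simpa [Real.norm_eq_abs] using (hΔ i).2.1 x)
    have h1 := condExp_mul_of_stronglyMeasurable_left (μ := Q) hsm hmul hdiff
    have hcg : Q[(fun x : Fin T → ℝ => x ⟨i, Nat.lt_of_succ_lt h⟩) | canonicalFiltration T i]
        = fun x => x ⟨i, Nat.lt_of_succ_lt h⟩ :=
      condExp_of_stronglyMeasurable hm
        ((coord_meas T i ⟨i, Nat.lt_of_succ_lt h⟩ le_rfl).stronglyMeasurable) (hint _)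
    have h2 : Q[(fun x : Fin T → ℝ =>
        x ⟨i + 1, h⟩ - x ⟨i, Nat.lt_of_succ_lt h⟩) | canonicalFiltration T i] =ᵐ[Q] 0 := by
      have hsub := condExp_sub (μ := Q) (m := canonicalFiltration T i) (hint ⟨i + 1, h⟩)
        (hint ⟨i, Nat.lt_of_succ_lt h⟩)
      refine EventuallyEq.trans ?_ (hsub.trans ?_)
      · rfl
      filter_upwards [hmart i h] with x hx
      simp only [Pi.sub_apply, Pi.zero_apply, hx, hcg, sub_self]
    have key : Q[Δ i * (fun x : Fin T → ℝ =>
        x ⟨i + 1, h⟩ - x ⟨i, Nat.lt_of_succ_lt h⟩) | canonicalFiltration T i] =ᵐ[Q] 0 := by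
      refine h1.trans ?_
      filter_upwards [h2] with x hx
      simp [hx]
    calc ∫ x, Δ i x * (x ⟨i + 1, h⟩ - x ⟨i, Nat.lt_of_succ_lt h⟩) ∂Q
        = ∫ x, (Q[Δ i * (fun x : Fin T → ℝ =>
            x ⟨i + 1, h⟩ - x ⟨i, Nat.lt_of_succ_lt h⟩) | canonicalFiltration T i]) x ∂Q :=
          (integral_condExp hm).symm
      _ = 0 := by rw [integral_congr_ae key]; simp
  · -- gains nonpositive ⇒ martingale
    intro hgains i h
    have hm : canonicalFiltration T i ≤ MeasurableSpace.pi := canon_le T i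
    haveI : SigmaFinite (Q.trim hm) := inferInstance
    have hiT : i < T - 1 := by omega
    have key : ∀ A : Set (Fin T → ℝ), MeasurableSet[canonicalFiltration T i] A →
        ∫ x in A, (x ⟨i + 1, h⟩ - x ⟨i, Nat.lt_of_succ_lt h⟩) ∂Q = 0 := by
      intro A hAm
      have hAb : MeasurableSet A := hm _ hAm
      have hstrat : ∀ ε : ℝ, |ε| ≤ 1 →
          IsStrategy T 1 (fun j x => if j = i then ε * A.indicator 1 x else 0) := by
        intro ε hε j
        refine ⟨?_, ?_, ?_⟩
        · dsimp only
          split_ifs with hj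
          · exact (measurable_const.mul ((measurable_indicator_const_iff 1).mpr hAb))
          · exact measurable_const
        · intro x
          dsimp only
          split_ifs with hj
          · by_cases hx : x ∈ A <;> simp [hx, abs_mul, hε]
          · simp
        · intro x y hxy
          dsimp only
          split_ifs with hj
          · subst hj
            have hmem := set_invariant T j hAm hxy
            by_cases hx : x ∈ A
            · simp [Set.indicator_of_mem hx, Set.indicator_of_mem (hmem.mp hx)]
            · simp [Set.indicator_of_notMem hx,
                Set.indicator_of_notMem (fun hy => hx (hmem.mpr hy))]
          · rfl
      have hgain : ∀ ε : ℝ, ∀ x, gain T (fun j x => if j = i then ε * A.indicator 1 x else 0) x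
          = ε * A.indicator (fun x => x ⟨i + 1, h⟩ - x ⟨i, Nat.lt_of_succ_lt h⟩) x := by
        intro ε x
        unfold gain
        rw [Finset.sum_eq_single_of_mem i (Finset.mem_range.mpr hiT)]
        · by_cases hx : x ∈ A <;> simp [dif_pos h, hx, mul_assoc]
        · intro k _ hk
          simp [hk]
      have hval : ∀ ε : ℝ, ∫ x, gain T (fun j x => if j = i then ε * A.indicator 1 x else 0) x ∂Q
          = ε * ∫ x in A, (x ⟨i + 1, h⟩ - x ⟨i, Nat.lt_of_succ_lt h⟩) ∂Q := by
        intro ε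
        simp_rw [hgain ε]
        rw [integral_const_mul, integral_indicator hAb]
      have h1 := hgains _ (hstrat 1 (by norm_num))
      have h2 := hgains _ (hstrat (-1) (by norm_num))
      rw [hval 1, one_mul] at h1
      rw [hval (-1), neg_one_mul, neg_nonpos] at h2
      linarith
    have hfinal := ae_eq_condExp_of_forall_setIntegral_eq hm (hint ⟨i + 1, h⟩)
      (fun s _ _ => (hint ⟨i, Nat.lt_of_succ_lt h⟩).integrableOn)
      (fun s hs _ => by
        have hsub : ∫ x in s, (x ⟨i + 1, h⟩ - x ⟨i, Nat.lt_of_succ_lt h⟩) ∂Q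
            = (∫ x in s, x ⟨i + 1, h⟩ ∂Q) - ∫ x in s, x ⟨i, Nat.lt_of_succ_lt h⟩ ∂Q :=
          integral_sub ((hint _).integrableOn) ((hint _).integrableOn)
        have hks := key s hs
        rw [hsub] at hks
        linarith)
      (StronglyMeasurable.aestronglyMeasurable
        ((coord_meas T i ⟨i, Nat.lt_of_succ_lt h⟩ le_rfl).stronglyMeasurable))
    exact hfinal.symm
end

section
/- If {Q_N} is a sequence in Π with A^1_T(Q_N) → 0, and a subsequence Q_{N_k} converges weakly to some probability measure Q_*, then Q_* ∈ Π and S is a Q_*-martingale. -/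
/-!
Testing `Q_n` against the one-period strategy `u(x_0, …, x_i) · (x_{i+1} - x_i)` shows that its
expected gain is at most `(‖u‖ + 1) · A¹_T(Q_n) → 0`. All `Q_n` share the marginals `μ_t`, which
have first moments, so truncating the coordinates at level `M` changes these gains by an error that
is uniform in `n` and vanishes as `M → ∞`; hence the gains pass to the weak limit and vanish under
`Q_*`. Vanishing against every bounded continuous `u` of the past makes the pushforwards of
`(x_{i+1} - x_i)⁺ dQ_*` and `(x_{i+1} - x_i)⁻ dQ_*` to the past coordinates equal, which is the
martingale property.
-/

open MeasureTheory Filter Topology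

def IsCtsStrategy (T : ℕ) (N : ℝ) (Δ : ℕ → (Fin T → ℝ) → ℝ) : Prop :=
  ∀ i, Continuous (Δ i) ∧ (∀ x, |Δ i x| ≤ N) ∧
    ∀ x y : Fin T → ℝ, (∀ j : Fin T, (j : ℕ) ≤ i → x j = y j) → Δ i x = Δ i y

noncomputable def Acts (T : ℕ) (Q : Measure (Fin T → ℝ)) : ℝ :=
  sSup {r : ℝ | ∃ Δ, IsCtsStrategy T 1 Δ ∧ r = ∫ x, gain T Δ x ∂Q}

open scoped BoundedContinuousFunction

def increment (T j : ℕ) (x : Fin T → ℝ) : ℝ :=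
  if h : j + 1 < T then x ⟨j + 1, h⟩ - x ⟨j, Nat.lt_of_succ_lt h⟩ else 0

section Gain

variable {T : ℕ}

lemma increment_of_lt {j : ℕ} (h : j + 1 < T) (x : Fin T → ℝ) :
    increment T j x = x ⟨j + 1, h⟩ - x ⟨j, Nat.lt_of_succ_lt h⟩ :=
  dif_pos h

lemma integrable_increment {P : Measure (Fin T → ℝ)}
    (hint : ∀ t, Integrable (fun x => x t) P) (j : ℕ) : Integrable (increment T j) P := by
  by_cases h : j + 1 < T
  · rw [funext (increment_of_lt h)]
    exact (hint _).sub (hint _)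
  · rw [show increment T j = 0 from funext fun x => dif_neg h]
    exact integrable_zero _ _ _

lemma gain_eq_sum (Δ : ℕ → (Fin T → ℝ) → ℝ) (x : Fin T → ℝ) :
    gain T Δ x = ∑ j ∈ Finset.range (T - 1), Δ j x * increment T j x := by
  refine Finset.sum_congr rfl fun j _ => ?_
  by_cases h : j + 1 < T <;> simp [increment, h]

lemma gain_smul (c : ℝ) (Δ : ℕ → (Fin T → ℝ) → ℝ) (x : Fin T → ℝ) :
    gain T (c • Δ) x = c * gain T Δ x := by
  simp only [gain_eq_sum, Finset.mul_sum, Pi.smul_apply, smul_eq_mul, mul_assoc]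

lemma gain_single {i : ℕ} (h : i + 1 < T) (f : (Fin T → ℝ) → ℝ) (x : Fin T → ℝ) :
    gain T (Pi.single i f) x = f x * increment T i x := by
  rw [gain_eq_sum, Finset.sum_eq_single_of_mem i (Finset.mem_range.mpr (by omega))]
  · simp
  · intro j _ hji
    simp [hji]

lemma IsCtsStrategy.smul {N : ℝ} {Δ : ℕ → (Fin T → ℝ) → ℝ} (hΔ : IsCtsStrategy T N Δ)
    (c : ℝ) : IsCtsStrategy T (|c| * N) (c • Δ) := by
  intro i
  obtain ⟨hcont, hbdd, hadapt⟩ := hΔ i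
  refine ⟨hcont.const_smul c, fun x => ?_, fun x y hxy => ?_⟩
  · simp only [Pi.smul_apply, smul_eq_mul, abs_mul]
    exact mul_le_mul_of_nonneg_left (hbdd x) (abs_nonneg c)
  · simp only [Pi.smul_apply, hadapt x y hxy]

lemma isCtsStrategy_single {N : ℝ} {i : ℕ} {f : (Fin T → ℝ) → ℝ} (hcont : Continuous f)
    (hbdd : ∀ x, |f x| ≤ N)
    (hadapt : ∀ x y : Fin T → ℝ, (∀ j : Fin T, (j : ℕ) ≤ i → x j = y j) → f x = f y) :
    IsCtsStrategy T N (Pi.single i f) := by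
  intro j
  by_cases hj : j = i
  · subst hj
    simpa using ⟨hcont, hbdd, hadapt⟩
  · simp only [Pi.single_eq_of_ne hj]
    exact ⟨continuous_const, fun _ => by simpa using (abs_nonneg _).trans (hbdd 0),
      fun _ _ _ => rfl⟩

variable {P : Measure (Fin T → ℝ)}

lemma integrable_mul_increment {N : ℝ} {Δ : ℕ → (Fin T → ℝ) → ℝ} (hΔ : IsCtsStrategy T N Δ)
    (hint : ∀ t, Integrable (fun x => x t) P) (j : ℕ) :
    Integrable (fun x => Δ j x * increment T j x) P :=
  (integrable_increment hint j).bdd_mul (hΔ j).1.aestronglyMeasurable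
    (ae_of_all _ fun x => ((hΔ j).2.1 x : ‖Δ j x‖ ≤ N))

lemma integral_gain_le {Δ : ℕ → (Fin T → ℝ) → ℝ} (hΔ : IsCtsStrategy T 1 Δ)
    (hint : ∀ t, Integrable (fun x => x t) P) :
    ∫ x, gain T Δ x ∂P ≤ ∑ j ∈ Finset.range (T - 1), ∫ x, |increment T j x| ∂P := by
  simp only [gain_eq_sum]
  rw [integral_finsetSum _ fun j _ => integrable_mul_increment hΔ hint j]
  refine Finset.sum_le_sum fun j _ => integral_mono (integrable_mul_increment hΔ hint j)
    (integrable_increment hint j).abs fun x => ?_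
  calc Δ j x * increment T j x ≤ |Δ j x| * |increment T j x| := by
        rw [← abs_mul]; exact le_abs_self _
    _ ≤ |increment T j x| := mul_le_of_le_one_left (abs_nonneg _) ((hΔ j).2.1 x)

lemma acts_bddAbove (hint : ∀ t, Integrable (fun x => x t) P) :
    BddAbove {r : ℝ | ∃ Δ, IsCtsStrategy T 1 Δ ∧ r = ∫ x, gain T Δ x ∂P} := by
  refine ⟨∑ j ∈ Finset.range (T - 1), ∫ x, |increment T j x| ∂P, ?_⟩
  rintro _ ⟨Δ, hΔ, rfl⟩
  exact integral_gain_le hΔ hint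

lemma abs_integral_gain_le_mul_acts {N : ℝ} (hN : 0 < N) {Δ : ℕ → (Fin T → ℝ) → ℝ}
    (hΔ : IsCtsStrategy T N Δ) (hint : ∀ t, Integrable (fun x => x t) P) :
    |∫ x, gain T Δ x ∂P| ≤ N * Acts T P := by
  have hscaled : ∀ c : ℝ, |c| = N⁻¹ → c * ∫ x, gain T Δ x ∂P ≤ Acts T P := fun c hc => by
    have hcΔ : IsCtsStrategy T 1 (c • Δ) := by
      simpa [hc, inv_mul_cancel₀ hN.ne'] using hΔ.smul c
    calc c * ∫ x, gain T Δ x ∂P = ∫ x, gain T (c • Δ) x ∂P := by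
          simp only [gain_smul, integral_const_mul]
      _ ≤ Acts T P := le_csSup (acts_bddAbove hint) ⟨c • Δ, hcΔ, rfl⟩
  have hpos := hscaled N⁻¹ (abs_of_pos (inv_pos.mpr hN))
  have hneg := hscaled (-N⁻¹) (by rw [abs_neg, abs_of_pos (inv_pos.mpr hN)])
  rw [inv_mul_le_iff₀ hN] at hpos
  rw [neg_mul, neg_le, le_inv_mul_iff₀ hN] at hneg
  exact abs_le.mpr ⟨by linarith, hpos⟩

end Gain

lemma integrable_of_map_eq {Ω : Type*} [MeasurableSpace Ω] {P : Measure Ω} {X : Ω → ℝ}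
    (hX : AEMeasurable X P) {ν : Measure ℝ} (hXν : P.map X = ν) (hν : Integrable id ν) :
    Integrable X P := by
  subst hXν
  exact (integrable_map_measure aestronglyMeasurable_id hX).mp hν

section Truncation

def trunc (M u : ℝ) : ℝ := max (-M) (min u M)

lemma continuous_trunc (M : ℝ) : Continuous (trunc M) := by
  unfold trunc; fun_prop

variable {M : ℝ}

lemma abs_trunc_le (hM : 0 ≤ M) (u : ℝ) : |trunc M u| ≤ M := by
  unfold trunc; rw [abs_le]; constructor <;> cases max_cases (-M) (min u M) <;>
    cases min_cases u M <;> linarith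

lemma abs_trunc_le_abs (hM : 0 ≤ M) (u : ℝ) : |trunc M u| ≤ |u| := by
  unfold trunc; rw [abs_le]; constructor <;> cases max_cases (-M) (min u M) <;>
    cases min_cases u M <;> cases abs_cases u <;> linarith

lemma abs_sub_trunc_le (hM : 0 ≤ M) (u : ℝ) : |u - trunc M u| ≤ |u| := by
  unfold trunc; rw [abs_le]; constructor <;> cases max_cases (-M) (min u M) <;>
    cases min_cases u M <;> cases abs_cases u <;> linarith

lemma trunc_of_abs_le {u : ℝ} (hu : |u| ≤ M) : trunc M u = u := by
  unfold trunc; cases abs_le.mp hu; rw [min_eq_left (by linarith), max_eq_right (by linarith)]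

lemma tendsto_integral_abs_sub_trunc {ν : Measure ℝ} (hν : Integrable id ν) :
    Tendsto (fun M : ℕ => ∫ u, |u - trunc M u| ∂ν) atTop (𝓝 0) := by
  rw [← integral_zero ℝ ℝ (μ := ν)]
  refine tendsto_integral_of_dominated_convergence (fun u => |u|)
    (fun M => (continuous_abs.comp (continuous_id.sub (continuous_trunc _))).aestronglyMeasurable)
    hν.abs (fun M => ae_of_all _ fun u => ?_) (ae_of_all _ fun u => ?_)
  · simpa only [Real.norm_eq_abs, abs_abs] using abs_sub_trunc_le (Nat.cast_nonneg M) u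
  · refine tendsto_const_nhds.congr' ?_
    filter_upwards [eventually_ge_atTop ⌈|u|⌉₊] with M hM
    rw [trunc_of_abs_le ((Nat.le_ceil _).trans (by exact_mod_cast hM)), sub_self, abs_zero]

lemma abs_integral_mul_sub_integral_mul_trunc_le {Ω : Type*} [MeasurableSpace Ω]
    {P : Measure Ω} {X : Ω → ℝ} (hX : AEMeasurable X P) {ν : Measure ℝ} (hXν : P.map X = ν)
    (hν : Integrable id ν) {f : Ω → ℝ} {C : ℝ} (hf : AEStronglyMeasurable f P)
    (hfC : ∀ ω, |f ω| ≤ C) (hM : 0 ≤ M) :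
    |∫ ω, f ω * X ω ∂P - ∫ ω, f ω * trunc M (X ω) ∂P| ≤ C * ∫ u, |u - trunc M u| ∂ν := by
  have hXint := integrable_of_map_eq hX hXν hν
  have htrunc_meas : AEStronglyMeasurable (fun ω => trunc M (X ω)) P :=
    (continuous_trunc M).comp_aestronglyMeasurable hX.aestronglyMeasurable
  have htrunc : Integrable (fun ω => trunc M (X ω)) P :=
    hXint.abs.mono' htrunc_meas (ae_of_all _ fun ω => abs_trunc_le_abs hM (X ω))
  have hfbdd : ∀ᵐ ω ∂P, ‖f ω‖ ≤ C := ae_of_all _ hfC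
  have herr : Integrable (fun ω => |X ω - trunc M (X ω)|) P := (hXint.sub htrunc).abs
  rw [← integral_sub (hXint.bdd_mul hf hfbdd) (htrunc.bdd_mul hf hfbdd)]
  simp_rw [← mul_sub]
  calc |∫ ω, f ω * (X ω - trunc M (X ω)) ∂P|
      ≤ ∫ ω, |f ω * (X ω - trunc M (X ω))| ∂P := abs_integral_le_integral_abs
    _ ≤ ∫ ω, C * |X ω - trunc M (X ω)| ∂P := by
        refine integral_mono_of_nonneg (ae_of_all _ fun ω => abs_nonneg _)
          (herr.const_mul C) (ae_of_all _ fun ω => ?_)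
        dsimp only
        rw [abs_mul]
        exact mul_le_mul_of_nonneg_right (hfC ω) (abs_nonneg _)
    _ = C * ∫ u, |u - trunc M u| ∂ν := by
        have hcont : Continuous fun u => |u - trunc M u| := by
          have := continuous_trunc M; fun_prop
        rw [integral_const_mul, ← hXν, integral_map hX hcont.aestronglyMeasurable]

end Truncation

section WeakConvergence

variable {Ω : Type*} [MeasurableSpace Ω] [TopologicalSpace Ω] [OpensMeasurableSpace Ω]
  {ι : Type*} {l : Filter ι} [l.NeBot] {Q : ι → ProbabilityMeasure Ω} {Q' : ProbabilityMeasure Ω}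

lemma map_eq_of_tendsto (hQ : Tendsto Q l (𝓝 Q')) {E : Type*} [TopologicalSpace E]
    [MeasurableSpace E] [BorelSpace E] [HasOuterApproxClosed E] {X : Ω → E} (hX : Continuous X)
    {ν : Measure E} (hQX : ∀ i, (Q i : Measure Ω).map X = ν) : (Q' : Measure Ω).map X = ν := by
  obtain ⟨i₀⟩ := l.nonempty_of_neBot
  have hconst : (fun i => (Q i).map hX.aemeasurable) = fun _ => (Q i₀).map hX.aemeasurable :=
    funext fun i => Subtype.ext ((hQX i).trans (hQX i₀).symm)
  have hlim := ProbabilityMeasure.tendsto_map_of_tendsto_of_continuous _ _ hQ hX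
  rw [hconst] at hlim
  exact (congrArg ProbabilityMeasure.toMeasure (tendsto_nhds_unique hlim tendsto_const_nhds)).trans
    (hQX i₀)

lemma tendsto_integral_mul_of_map_eq (hQ : Tendsto Q l (𝓝 Q'))
    {X : Ω → ℝ} (hX : Continuous X) {ν : Measure ℝ} (hν : Integrable id ν)
    (hQX : ∀ i, (Q i : Measure Ω).map X = ν) (f : Ω →ᵇ ℝ) :
    Tendsto (fun i => ∫ ω, f ω * X ω ∂(Q i : Measure Ω)) l
      (𝓝 (∫ ω, f ω * X ω ∂(Q' : Measure Ω))) := by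
  set err : ℕ → ℝ := fun M => ‖f‖ * ∫ u, |u - trunc M u| ∂ν
  have herr : Tendsto err atTop (𝓝 0) := by
    simpa using (tendsto_integral_abs_sub_trunc hν).const_mul ‖f‖
  have happrox : ∀ P : Measure Ω, P.map X = ν → ∀ M : ℕ,
      |∫ ω, f ω * X ω ∂P - ∫ ω, f ω * trunc M (X ω) ∂P| ≤ err M := fun P hP M =>
    abs_integral_mul_sub_integral_mul_trunc_le hX.aemeasurable hP hν
      f.continuous.aestronglyMeasurable (fun ω => f.norm_coe_le_norm ω) (Nat.cast_nonneg M)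
  let fTrunc : ℕ → Ω →ᵇ ℝ := fun M => f * .ofNormedAddCommGroup (fun ω => trunc M (X ω))
    ((continuous_trunc M).comp hX) M fun ω => abs_trunc_le (Nat.cast_nonneg M) _
  refine TendstoUniformly.tendsto_of_eventually_tendsto
    (F := fun (M : ℕ) i => ∫ ω, f ω * trunc M (X ω) ∂(Q i : Measure Ω)) (p := atTop) ?_
    (Eventually.of_forall fun M =>
      ProbabilityMeasure.tendsto_iff_forall_integral_tendsto.mp hQ (fTrunc M)) ?_
  · refine Metric.tendstoUniformly_iff.mpr fun ε hε => ?_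
    filter_upwards [herr.eventually (gt_mem_nhds hε)] with M hM i
    exact (happrox _ (hQX i) M).trans_lt hM
  · refine tendsto_iff_norm_sub_tendsto_zero.mpr (squeeze_zero (fun _ => norm_nonneg _)
      (fun M => ?_) herr)
    rw [Real.norm_eq_abs, abs_sub_comm]
    exact happrox _ (map_eq_of_tendsto hQ hX hQX) M

end WeakConvergence

section Conditioning

variable {Ω E : Type*} [MeasurableSpace Ω] [TopologicalSpace E] [MeasurableSpace E]
  [HasOuterApproxClosed E] [BorelSpace E] {P : Measure Ω} {π : Ω → E}

lemma setIntegral_preimage_eq_zero_of_forall_integral_mul_eq_zero (hπ : Measurable π)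
    {g : Ω → ℝ} (hg : Integrable g P) (h : ∀ u : E →ᵇ ℝ, ∫ ω, u (π ω) * g ω ∂P = 0)
    {B : Set E} (hB : MeasurableSet B) : ∫ ω in π ⁻¹' B, g ω ∂P = 0 := by
  have : IsFiniteMeasure (P.withDensity fun ω => ENNReal.ofReal (g ω)) :=
    isFiniteMeasure_withDensity_ofReal hg.2
  have : IsFiniteMeasure (P.withDensity fun ω => ENNReal.ofReal (-g ω)) :=
    isFiniteMeasure_withDensity_ofReal hg.neg.2
  have hmap : (P.withDensity fun ω => ENNReal.ofReal (g ω)).map π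
      = (P.withDensity fun ω => ENNReal.ofReal (-g ω)).map π := by
    refine ext_of_forall_integral_eq_of_IsFiniteMeasure fun u => ?_
    have hu : AEStronglyMeasurable (fun ω => u (π ω)) P :=
      (u.continuous.measurable.comp hπ).aestronglyMeasurable
    have hubdd : ∀ᵐ ω ∂P, ‖u (π ω)‖ ≤ ‖u‖ := ae_of_all _ fun ω => u.norm_coe_le_norm _
    rw [integral_map hπ.aemeasurable u.continuous.aestronglyMeasurable,
      integral_map hπ.aemeasurable u.continuous.aestronglyMeasurable,
      integral_withDensity_eq_integral_toReal_smul₀ hg.1.aemeasurable.ennreal_ofReal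
        (ae_of_all _ fun _ => ENNReal.ofReal_lt_top),
      integral_withDensity_eq_integral_toReal_smul₀ (f := fun ω => ENNReal.ofReal (-g ω))
        hg.1.aemeasurable.neg.ennreal_ofReal
        (ae_of_all _ fun _ => ENNReal.ofReal_lt_top)]
    simp only [ENNReal.toReal_ofReal', smul_eq_mul]
    have hneg : Integrable (fun ω => max (-g ω) 0) P := hg.neg.pos_part
    rw [← sub_eq_zero, ← integral_sub (hg.pos_part.mul_bdd hu hubdd) (hneg.mul_bdd hu hubdd)]
    simpa only [← sub_mul, max_zero_sub_max_neg_zero_eq_self, mul_comm] using h u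
  have hB' := congrArg (· B) hmap
  simp only [Measure.map_apply hπ hB, withDensity_apply _ (hπ hB)] at hB'
  rw [integral_eq_lintegral_pos_part_sub_lintegral_neg_part hg.integrableOn, hB', sub_self]

lemma condExp_comap_ae_eq_of_forall_integral_mul_sub_eq_zero [IsFiniteMeasure P]
    (hπ : Measurable π) {X Y : Ω → ℝ} (hX : Integrable X P) (hY : Integrable Y P)
    (hYπ : Measurable[MeasurableSpace.comap π ‹_›] Y)
    (h : ∀ u : E →ᵇ ℝ, ∫ ω, u (π ω) * (X ω - Y ω) ∂P = 0) :
    P[X | MeasurableSpace.comap π ‹_›] =ᵐ[P] Y := by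
  refine (ae_eq_condExp_of_forall_setIntegral_eq hπ.comap_le hX (fun _ _ _ => hY.integrableOn)
    (fun s hs _ => ?_) hYπ.aestronglyMeasurable).symm
  obtain ⟨B, hB, rfl⟩ := hs
  have hzero := setIntegral_preimage_eq_zero_of_forall_integral_mul_eq_zero
    (g := fun ω => X ω - Y ω) hπ (hX.sub hY) h hB
  rw [integral_sub hX.integrableOn hY.integrableOn, sub_eq_zero] at hzero
  exact hzero.symm

end Conditioning

lemma canonicalFiltration_eq_comap (T i : ℕ) :
    canonicalFiltration T i
      = MeasurableSpace.comap (Subtype.restrict fun j : Fin T => (j : ℕ) ≤ i) inferInstance := by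
  simp only [canonicalFiltration, MeasurableSpace.pi, MeasurableSpace.comap_iSup,
    MeasurableSpace.comap_comp]
  rfl

lemma integral_mul_increment_eq_zero_of_tendsto_acts {T : ℕ} {μ : Fin T → Measure ℝ}
    (hmom : ∀ t, Integrable id (μ t)) {ι : Type*} {l : Filter ι} [l.NeBot]
    {Q : ι → ProbabilityMeasure (Fin T → ℝ)}
    (hmarg : ∀ n t, (Q n : Measure (Fin T → ℝ)).map (fun x => x t) = μ t)
    (hA : Tendsto (fun n => Acts T (Q n)) l (𝓝 0)) {Q' : ProbabilityMeasure (Fin T → ℝ)}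
    (hQ : Tendsto Q l (𝓝 Q')) {i : ℕ} (h : i + 1 < T)
    (u : ({j : Fin T // (j : ℕ) ≤ i} → ℝ) →ᵇ ℝ) :
    ∫ x, u (Subtype.restrict _ x) * increment T i x ∂(Q' : Measure (Fin T → ℝ)) = 0 := by
  let f : (Fin T → ℝ) →ᵇ ℝ :=
    u.compContinuous ⟨Subtype.restrict _, continuous_pi fun _ => continuous_apply _⟩
  have hint : ∀ P : Measure (Fin T → ℝ), (∀ t, P.map (fun x => x t) = μ t) →
      ∀ t, Integrable (fun x => x t) P := fun P hP t =>
    integrable_of_map_eq (measurable_pi_apply t).aemeasurable (hP t) (hmom t)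
  have hsplit : ∀ P : Measure (Fin T → ℝ), (∀ t, P.map (fun x => x t) = μ t) →
      ∫ x, f x * increment T i x ∂P
        = ∫ x, f x * x ⟨i + 1, h⟩ ∂P - ∫ x, f x * x ⟨i, Nat.lt_of_succ_lt h⟩ ∂P := by
    intro P hP
    have hfbdd : ∀ᵐ x ∂P, ‖f x‖ ≤ ‖f‖ := ae_of_all _ f.norm_coe_le_norm
    simp_rw [increment_of_lt h, mul_sub]
    exact integral_sub ((hint P hP _).bdd_mul f.continuous.aestronglyMeasurable hfbdd)
      ((hint P hP _).bdd_mul f.continuous.aestronglyMeasurable hfbdd)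
  have hlim : Tendsto (fun n => ∫ x, f x * increment T i x ∂(Q n : Measure (Fin T → ℝ))) l
      (𝓝 (∫ x, f x * increment T i x ∂(Q' : Measure (Fin T → ℝ)))) := by
    simp_rw [hsplit _ (hmarg _),
      hsplit _ fun t => map_eq_of_tendsto hQ (continuous_apply t) fun n => hmarg n t]
    exact (tendsto_integral_mul_of_map_eq hQ (continuous_apply _) (hmom _) (hmarg · _) f).sub
      (tendsto_integral_mul_of_map_eq hQ (continuous_apply _) (hmom _) (hmarg · _) f)
  have hzero : Tendsto (fun n => ∫ x, f x * increment T i x ∂(Q n : Measure (Fin T → ℝ))) l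
      (𝓝 0) := by
    refine squeeze_zero_norm (fun n => ?_) (by simpa using hA.const_mul (‖f‖ + 1))
    have hstrat : IsCtsStrategy T (‖f‖ + 1) (Pi.single i f) :=
      isCtsStrategy_single f.continuous
        (fun x => (f.norm_coe_le_norm x).trans (le_add_of_nonneg_right zero_le_one))
        fun x y hxy => congrArg u (funext fun j => hxy j.1 j.2)
    simpa only [gain_single h, Real.norm_eq_abs] using
      abs_integral_gain_le_mul_acts (by positivity) hstrat (hint _ (hmarg n))
  exact tendsto_nhds_unique hlim hzero

theorem stmt5_general (T : ℕ) (μ : Fin T → Measure ℝ)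
    (hmom : ∀ t, Integrable id (μ t))
    (Q : ℕ → ProbabilityMeasure (Fin T → ℝ))
    (hmarg : ∀ n t, (Q n).toMeasure.map (fun x => x t) = μ t)
    (hA : Tendsto (fun n => Acts T (Q n).toMeasure) atTop (nhds 0))
    (φ : ℕ → ℕ) (hφ : StrictMono φ)
    (Qstar : ProbabilityMeasure (Fin T → ℝ))
    (hconv : Tendsto (fun k => Q (φ k)) atTop (nhds Qstar)) :
    (∀ t, Qstar.toMeasure.map (fun x => x t) = μ t) ∧
    (∀ i : ℕ, ∀ h : i + 1 < T,
      Qstar.toMeasure[fun x => x ⟨i + 1, h⟩ | canonicalFiltration T i]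
        =ᵐ[Qstar.toMeasure] fun x => x ⟨i, Nat.lt_of_succ_lt h⟩) := by
  have hmargstar : ∀ t, Qstar.toMeasure.map (fun x => x t) = μ t := fun t =>
    map_eq_of_tendsto hconv (continuous_apply t) fun k => hmarg (φ k) t
  refine ⟨hmargstar, fun i h => ?_⟩
  have hint : ∀ t, Integrable (fun x => x t) Qstar.toMeasure := fun t =>
    integrable_of_map_eq (measurable_pi_apply t).aemeasurable (hmargstar t) (hmom t)
  have hprev : Measurable[canonicalFiltration T i] fun x => x ⟨i, Nat.lt_of_succ_lt h⟩ :=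
    measurable_iff_comap_le.mpr (le_iSup_of_le ⟨⟨i, Nat.lt_of_succ_lt h⟩, le_rfl⟩ le_rfl)
  rw [canonicalFiltration_eq_comap] at hprev ⊢
  refine condExp_comap_ae_eq_of_forall_integral_mul_sub_eq_zero
    (continuous_pi fun _ => continuous_apply _).measurable (hint _) (hint _) hprev fun u => ?_
  have hzero := integral_mul_increment_eq_zero_of_tendsto_acts hmom
    (fun k => hmarg (φ k)) (hA.comp hφ.tendsto_atTop) hconv h u
  simp only [increment_of_lt h] at hzero
  exact hzero

/-- if `A¹_T(Q_N) → 0` along a sequence in `Π` and a subsequence converges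
weakly to `Q_*`, then `Q_* ∈ Π` and `S` is a `Q_*`-martingale. -/
theorem stmt5 (T : ℕ) (hT : 2 ≤ T) (μ : Fin T → Measure ℝ)
    (hprob : ∀ t, IsProbabilityMeasure (μ t))
    (hsupp : ∀ t, μ t (Set.Iio 0) = 0)
    (hmom : ∀ t, Integrable id (μ t))
    (Q : ℕ → ProbabilityMeasure (Fin T → ℝ))
    (hmarg : ∀ n t, (Q n).toMeasure.map (fun x => x t) = μ t)
    (hA : Tendsto (fun n => Acts T (Q n).toMeasure) atTop (nhds 0))
    (φ : ℕ → ℕ) (hφ : StrictMono φ)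
    (Qstar : ProbabilityMeasure (Fin T → ℝ))
    (hconv : Tendsto (fun k => Q (φ k)) atTop (nhds Qstar)) :
    (∀ t, Qstar.toMeasure.map (fun x => x t) = μ t) ∧
    (∀ i : ℕ, ∀ h : i + 1 < T,
      Qstar.toMeasure[fun x => x ⟨i + 1, h⟩ | canonicalFiltration T i]
        =ᵐ[Qstar.toMeasure] fun x => x ⟨i, Nat.lt_of_succ_lt h⟩) :=
  stmt5_general T μ hmom Q hmarg hA φ hφ Qstar hconv
end

section
/- If Φ satisfies Φ(x) ≥ −K(1 + x_1 + … + x_T) and (u, Δ) is a superhedge of Φ with |Δ_t| ≤ N for all t, then ⊕u(x) ≥ −(K + 2N)(1 + x_1 + … + x_T) for all x ∈ Ω; hence there exist constants a_1,…,a_T summing to 0 such that each ū_t := a_t + u_t + (K + 2N)(1/T + x_t) is nonnegative and (ū, −Δ)-type rearrangement gives a superhedge of Φ + Γ with Γ(x) = (K+2N)(1 + Σ x_t) by nonnegative static parts. -/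
open MeasureTheory Filter Topology

open Finset

/-! A strategy bounded by `N` gains at most `2N Σ x_t` in absolute value, so the superhedge and
the lower bound on `Φ` give `Σ_t v_t(x_t) ≥ 0` on `Ω` for `v_t(y) = u_t(y) + (K + 2N)(1/T + y)`.
Because the coordinates `x_t` vary independently, each `m_t = inf_{y ≥ 0} v_t(y)` is finite and
`Σ_t m_t ≥ 0`; the constants `a_t = (Σ_s m_s)/T - m_t` then sum to `0` and make every
`a_t + v_t` nonnegative. -/

lemma gain_neg (T : ℕ) (Δ : ℕ → (Fin T → ℝ) → ℝ) (x : Fin T → ℝ) :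
    gain T (fun i z => -(Δ i z)) x = -gain T Δ x := by
  rw [gain, gain, ← sum_neg_distrib]
  refine sum_congr rfl fun i _ => ?_
  split_ifs <;> ring

lemma sum_range_dite_lt_eq_sum {T n : ℕ} (hn : T ≤ n) (f : Fin T → ℝ) :
    ∑ i ∈ range n, (if h : i < T then f ⟨i, h⟩ else 0) = ∑ t, f t := by
  rw [← sum_subset (range_subset_range.2 hn) fun i _ hi => dif_neg (by simpa using hi),
    ← Fin.sum_univ_eq_sum_range]
  simp

lemma abs_gain_le {T : ℕ} {N : ℝ} {Δ : ℕ → (Fin T → ℝ) → ℝ} (hΔ : ∀ i y, |Δ i y| ≤ N)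
    (x : Fin T → ℝ) : |gain T Δ x| ≤ 2 * N * ∑ t, |x t| := by
  have hN : 0 ≤ N := (abs_nonneg _).trans (hΔ 0 x)
  set X : ℕ → ℝ := fun i => if h : i < T then |x ⟨i, h⟩| else 0 with hX
  have hX_nonneg : ∀ i, 0 ≤ X i := fun i => by simp only [hX]; split <;> positivity
  have hX_sum : ∀ n, T ≤ n → ∑ i ∈ range n, X i = ∑ t, |x t| :=
    fun n hn => sum_range_dite_lt_eq_sum hn fun t => |x t|
  have hterm : ∀ i, |if h : i + 1 < T then Δ i x * (x ⟨i + 1, h⟩ - x ⟨i, Nat.lt_of_succ_lt h⟩)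
      else 0| ≤ N * (X i + X (i + 1)) := by
    intro i
    split_ifs with h
    · simp only [abs_mul, hX, dif_pos (Nat.lt_of_succ_lt h), dif_pos h]
      exact mul_le_mul (hΔ i x) ((abs_sub _ _).trans_eq (add_comm _ _)) (abs_nonneg _) hN
    · simpa using mul_nonneg hN (add_nonneg (hX_nonneg i) (hX_nonneg (i + 1)))
  have hshift : ∑ i ∈ range (T - 1), X (i + 1) ≤ ∑ i ∈ range (T + 1), X i := by
    rw [sum_range_succ']
    exact le_add_of_le_of_nonneg (sum_le_sum_of_subset_of_nonneg
      (range_subset_range.2 (Nat.sub_le T 1)) fun i _ _ => hX_nonneg _) (hX_nonneg 0)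
  have hinit : ∑ i ∈ range (T - 1), X i ≤ ∑ i ∈ range T, X i :=
    sum_le_sum_of_subset_of_nonneg (range_subset_range.2 (Nat.sub_le T 1))
      fun i _ _ => hX_nonneg _
  calc |gain T Δ x| ≤ ∑ i ∈ range (T - 1), N * (X i + X (i + 1)) :=
        (abs_sum_le_sum_abs _ _).trans (sum_le_sum fun i _ => hterm i)
    _ = N * (∑ i ∈ range (T - 1), X i + ∑ i ∈ range (T - 1), X (i + 1)) := by
        rw [← sum_add_distrib, mul_sum]
    _ ≤ N * (∑ i ∈ range T, X i + ∑ i ∈ range (T + 1), X i) := by gcongr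
    _ = 2 * N * ∑ t, |x t| := by
        rw [hX_sum T le_rfl, hX_sum (T + 1) (Nat.le_succ T)]; ring

section ZeroSumShift

variable {ι α : Type*} [Fintype ι] {v : ι → α → ℝ} {s : Set α}

lemma bddBelow_image_of_sum_nonneg (hs : s.Nonempty)
    (hv : ∀ x : ι → α, (∀ t, x t ∈ s) → 0 ≤ ∑ t, v t (x t)) (t : ι) :
    BddBelow (v t '' s) := by
  classical
  obtain ⟨y₀, hy₀⟩ := hs
  refine ⟨-∑ r ∈ univ.erase t, v r y₀, ?_⟩
  rintro _ ⟨y, hy, rfl⟩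
  have key := hv (Function.update (fun _ => y₀) t y) fun r => by
    rcases eq_or_ne r t with rfl | hr <;> simp [*]
  rw [← add_sum_erase _ _ (mem_univ t), Function.update_self,
    sum_congr rfl fun r hr => by rw [Function.update_of_ne (ne_of_mem_erase hr)]] at key
  linarith

lemma sum_sInf_image_nonneg (hs : s.Nonempty)
    (hv : ∀ x : ι → α, (∀ t, x t ∈ s) → 0 ≤ ∑ t, v t (x t)) :
    0 ≤ ∑ t, sInf (v t '' s) := by
  refine le_of_forall_pos_le_add fun ε hε => ?_
  set δ := ε / (Fintype.card ι + 1) with hδ_def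
  have hδ : 0 < δ := by positivity
  have hnear : ∀ t, ∃ y ∈ s, v t y < sInf (v t '' s) + δ := fun t => by
    obtain ⟨_, ⟨y, hy, rfl⟩, hlt⟩ :=
      exists_lt_of_csInf_lt (hs.image (v t)) (lt_add_of_pos_right _ hδ)
    exact ⟨y, hy, hlt⟩
  choose y hy hlt using hnear
  calc 0 ≤ ∑ t, v t (y t) := hv y hy
    _ ≤ ∑ t, (sInf (v t '' s) + δ) := sum_le_sum fun t _ => (hlt t).le
    _ = ∑ t, sInf (v t '' s) + Fintype.card ι * δ := by
        rw [sum_add_distrib, sum_const, card_univ, nsmul_eq_mul]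
    _ ≤ ∑ t, sInf (v t '' s) + ε := by
        rw [hδ_def, mul_div_assoc']
        gcongr
        exact div_le_of_le_mul₀ (by positivity) hε.le (by nlinarith)

theorem exists_sum_eq_zero_forall_nonneg_add (hs : s.Nonempty)
    (hv : ∀ x : ι → α, (∀ t, x t ∈ s) → 0 ≤ ∑ t, v t (x t)) :
    ∃ a : ι → ℝ, ∑ t, a t = 0 ∧ ∀ t, ∀ y ∈ s, 0 ≤ a t + v t y := by
  set m : ι → ℝ := fun t => sInf (v t '' s)
  refine ⟨fun t => (∑ r, m r) / Fintype.card ι - m t, ?_, fun t y hy => ?_⟩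
  · rw [sum_sub_distrib, sum_const, card_univ, nsmul_eq_mul, mul_div_cancel_of_imp', sub_self]
    intro h
    have : IsEmpty ι := Fintype.card_eq_zero_iff.1 (by exact_mod_cast h)
    simp
  · have hm : m t ≤ v t y := csInf_le (bddBelow_image_of_sum_nonneg hs hv t) ⟨y, hy, rfl⟩
    have hshift : 0 ≤ (∑ r, m r) / Fintype.card ι :=
      div_nonneg (sum_sInf_image_nonneg hs hv) (Nat.cast_nonneg _)
    linarith

end ZeroSumShift

theorem stmt15_general (T : ℕ) (hT : 2 ≤ T) (K N : ℝ)
    (Φ : (Fin T → ℝ) → ℝ) (u : Fin T → ℝ → ℝ) (Δ : ℕ → (Fin T → ℝ) → ℝ)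
    (hΔ : IsStrategy T N Δ)
    (hΦlb : ∀ x : Fin T → ℝ, (∀ t, 0 ≤ x t) → -(K * (1 + ∑ t, x t)) ≤ Φ x)
    (hhedge : ∀ x : Fin T → ℝ, (∀ t, 0 ≤ x t) →
      Φ x ≤ (∑ t, u t (x t)) + gain T Δ x) :
    (∀ x : Fin T → ℝ, (∀ t, 0 ≤ x t) →
      -((K + 2 * N) * (1 + ∑ t, x t)) ≤ ∑ t, u t (x t)) ∧
    ∃ a : Fin T → ℝ, (∑ t, a t = 0) ∧
      (∀ t : Fin T, ∀ y : ℝ, 0 ≤ y →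
        0 ≤ a t + u t y + (K + 2 * N) * (1 / T + y)) ∧
      (∀ x : Fin T → ℝ, (∀ t, 0 ≤ x t) →
        Φ x + (K + 2 * N) * (1 + ∑ t, x t) + gain T (fun i z => -(Δ i z)) x
          ≤ ∑ t, (a t + u t (x t) + (K + 2 * N) * (1 / T + x t))) := by
  have hN : 0 ≤ N := (abs_nonneg _).trans ((hΔ 0).2.1 0)
  have hgain : ∀ x : Fin T → ℝ, (∀ t, 0 ≤ x t) → gain T Δ x ≤ 2 * N * ∑ t, x t := fun x hx =>
    (le_abs_self _).trans <| by
      simpa only [abs_of_nonneg (hx _)] using abs_gain_le (fun i => (hΔ i).2.1) x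
  have hu : ∀ x : Fin T → ℝ, (∀ t, 0 ≤ x t) →
      -((K + 2 * N) * (1 + ∑ t, x t)) ≤ ∑ t, u t (x t) := fun x hx => by
    linarith [hhedge x hx, hΦlb x hx, hgain x hx]
  have hΓ : ∀ x : Fin T → ℝ, ∑ t, (K + 2 * N) * (1 / T + x t) = (K + 2 * N) * (1 + ∑ t, x t) := by
    intro x
    have hT0 : (T : ℝ) ≠ 0 := Nat.cast_ne_zero.2 (by omega)
    rw [← mul_sum, sum_add_distrib, sum_const, card_univ, Fintype.card_fin, nsmul_eq_mul,
      mul_one_div_cancel hT0]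
  obtain ⟨a, ha, ha_nonneg⟩ := exists_sum_eq_zero_forall_nonneg_add (s := Set.Ici 0)
    (v := fun t y => u t y + (K + 2 * N) * (1 / T + y)) Set.nonempty_Ici fun x hx => by
      rw [sum_add_distrib, hΓ]; linarith [hu x hx]
  refine ⟨hu, a, ha, fun t y hy => (ha_nonneg t y hy).trans_eq (add_assoc _ _ _).symm,
    fun x hx => ?_⟩
  rw [sum_add_distrib, sum_add_distrib, ha, hΓ, gain_neg]
  linarith [hhedge x hx]

/-- if `Φ ≥ −K(1+Σx_t)` and `(u,Δ)` superhedges `Φ` with `|Δ_t| ≤ N`, then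
`⊕u(x) ≥ −(K+2N)(1+Σx_t)` on `Ω`, and there exist constants `a_t` summing to `0` making
`ū_t = a_t + u_t + (K+2N)(1/T + ·)` nonnegative, with `⊕ū ≥ Φ + Γ + ((−Δ)·x)_T`. -/
theorem stmt15 (T : ℕ) (hT : 2 ≤ T) (K N : ℝ) (hK : 0 < K) (hN : 0 ≤ N)
    (Φ : (Fin T → ℝ) → ℝ) (u : Fin T → ℝ → ℝ) (Δ : ℕ → (Fin T → ℝ) → ℝ)
    (hΔ : IsStrategy T N Δ)
    (hΦlb : ∀ x : Fin T → ℝ, (∀ t, 0 ≤ x t) → -(K * (1 + ∑ t, x t)) ≤ Φ x)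
    (hhedge : ∀ x : Fin T → ℝ, (∀ t, 0 ≤ x t) →
      Φ x ≤ (∑ t, u t (x t)) + gain T Δ x) :
    (∀ x : Fin T → ℝ, (∀ t, 0 ≤ x t) →
      -((K + 2 * N) * (1 + ∑ t, x t)) ≤ ∑ t, u t (x t)) ∧
    ∃ a : Fin T → ℝ, (∑ t, a t = 0) ∧
      (∀ t : Fin T, ∀ y : ℝ, 0 ≤ y →
        0 ≤ a t + u t y + (K + 2 * N) * (1 / T + y)) ∧
      (∀ x : Fin T → ℝ, (∀ t, 0 ≤ x t) →
        Φ x + (K + 2 * N) * (1 + ∑ t, x t) + gain T (fun i z => -(Δ i z)) x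
          ≤ ∑ t, (a t + u t (x t) + (K + 2 * N) * (1 / T + x t))) :=
  stmt15_general T hT K N Φ u Δ hΔ hΦlb hhedge
end

section
/- Let T = 2 and for M ∈ ℕ let Q_M be the probability measure on [0,1]² with density g(x_1,x_2) = M Σ_{i=0}^{M−1} 1_{[i/M,(i+1)/M)²}(x_1,x_2) with respect to Lebesgue measure. Then both marginals of Q_M are Lebesgue measure on [0,1], E_{Q_M}[S_2 | S_1 = x] = (2i+1)/(2M) for x ∈ [i/M,(i+1)/M), and E_{Q_M}[ |E_{Q_M}[S_2|S_1] − S_1| ] = 1/(4M). -/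
/-!
`Q_M` is the sum over the cells `Iᵢ = [i/M, (i+1)/M)` of the blocks `M • (λ|Iᵢ ⊗ λ|Iᵢ)`. Each
block is a product measure, and the first coordinate alone tells which block a point lies in, so
conditioning `S₂` on `S₁` averages `S₂` over the cell of `S₁`, giving the midpoint of that cell.
Each marginal is `∑ᵢ M λ(Iᵢ) • λ|Iᵢ = λ|[0,1)`. Hence `|E[S₂|S₁] - S₁|` is a function of `S₁`
alone, whose law is uniform, and its expectation is `M` times `∫_{Iᵢ} |midpoint - u| du = 1/(4M²)`.
-/

open MeasureTheory Filter Topology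

/-- The density `g(x₁,x₂) = M ∑_{i=0}^{M−1} 1_{[i/M,(i+1)/M)²}(x₁,x₂)`. -/
noncomputable def densityg (M : ℕ) (x : ℝ × ℝ) : ℝ :=
  M * ∑ i ∈ Finset.range M,
    Set.indicator
      (Set.Ico ((i : ℝ) / M) ((i + 1 : ℕ) / M) ×ˢ Set.Ico ((i : ℝ) / M) ((i + 1 : ℕ) / M))
      (fun _ => (1 : ℝ)) x

noncomputable def QM (M : ℕ) : Measure (ℝ × ℝ) :=
  (volume : Measure (ℝ × ℝ)).withDensity (fun x => ENNReal.ofReal (densityg M x))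

open Set
open scoped ENNReal NNReal

theorem Monotone.biUnion_range_Ico {β : Type*} [LinearOrder β] {f : ℕ → β} (hf : Monotone f)
    (n : ℕ) : ⋃ i ∈ Finset.range n, Ico (f i) (f (i + 1)) = Ico (f 0) (f n) := by
  induction n with
  | zero => simp
  | succ n ih =>
    rw [Finset.range_add_one, Finset.set_biUnion_insert, ih, union_comm,
      Ico_union_Ico_eq_Ico (hf n.zero_le) (hf n.le_succ)]

theorem Finset.sum_indicator_const_of_mem {α ι M : Type*} [AddCommMonoid M] {S : Finset ι}
    {s : ι → Set α} (hS : (S : Set ι).PairwiseDisjoint s) (c : ι → M) {i : ι} (hi : i ∈ S)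
    {x : α} (hx : x ∈ s i) : ∑ j ∈ S, (s j).indicator (fun _ => c j) x = c i := by
  refine (Finset.sum_eq_single_of_mem i hi fun j hj hji => ?_).trans (indicator_of_mem hx _)
  exact indicator_of_notMem (fun hxj => Set.disjoint_left.mp (hS hj hi hji) hxj hx) _

theorem setAverage_id_Ico {a b : ℝ} (hab : a < b) : ⨍ x in Ico a b, x = (a + b) / 2 := by
  rw [setAverage_eq, setIntegral_congr_set Ico_ae_eq_Ioc, ← intervalIntegral.integral_of_le hab.le,
    integral_id, measureReal_def, Real.volume_Ico, ENNReal.toReal_ofReal (sub_nonneg.2 hab.le),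
    smul_eq_mul]
  have hba : b - a ≠ 0 := sub_ne_zero.2 hab.ne'
  field_simp
  ring

theorem setIntegral_Ico_abs_midpoint_sub {a b : ℝ} (hab : a ≤ b) :
    ∫ x in Ico a b, |(a + b) / 2 - x| = (b - a) ^ 2 / 4 := by
  have hcont : Continuous fun x : ℝ => |(a + b) / 2 - x| := by fun_prop
  have hleft :
      ∫ x in a..(a + b) / 2, |(a + b) / 2 - x| = ∫ x in a..(a + b) / 2, ((a + b) / 2 - x) :=
    intervalIntegral.integral_congr fun x hx => by
      rw [uIcc_of_le (by linarith)] at hx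
      exact abs_of_nonneg (by linarith [hx.2])
  have hright :
      ∫ x in (a + b) / 2..b, |(a + b) / 2 - x| = ∫ x in (a + b) / 2..b, (x - (a + b) / 2) :=
    intervalIntegral.integral_congr fun x hx => by
      rw [uIcc_of_le (by linarith)] at hx
      exact abs_of_nonpos (by linarith [hx.1]) |>.trans (neg_sub _ _)
  rw [setIntegral_congr_set Ico_ae_eq_Ioc, ← intervalIntegral.integral_of_le hab,
    ← intervalIntegral.integral_add_adjacent_intervals (hcont.intervalIntegrable _ _)
      (hcont.intervalIntegrable _ _), hleft, hright,
    intervalIntegral.integral_sub intervalIntegrable_const intervalIntegral.intervalIntegrable_id,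
    intervalIntegral.integral_sub intervalIntegral.intervalIntegrable_id intervalIntegrable_const,
    intervalIntegral.integral_const, intervalIntegral.integral_const, integral_id, integral_id,
    smul_eq_mul, smul_eq_mul]
  ring

namespace MeasureTheory

theorem withDensity_finsetSum {α ι : Type*} {m : MeasurableSpace α} (μ : Measure α)
    {S : Finset ι} {f : ι → α → ℝ≥0∞} (hf : ∀ i ∈ S, Measurable (f i)) :
    μ.withDensity (∑ i ∈ S, f i) = ∑ i ∈ S, μ.withDensity (f i) := by
  classical
  induction S using Finset.induction_on with
  | empty => simp
  | insert j S hj ih =>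
    rw [Finset.sum_insert hj, Finset.sum_insert hj,
      withDensity_add_left (hf j (Finset.mem_insert_self j S)),
      ih fun i hi => hf i (Finset.mem_insert_of_mem hi)]

theorem Measure.restrict_finsetSum {α ι : Type*} {m : MeasurableSpace α} (S : Finset ι)
    (μ : ι → Measure α) (s : Set α) :
    (∑ i ∈ S, μ i).restrict s = ∑ i ∈ S, (μ i).restrict s := by
  simp only [← restrictₗ_apply]
  exact _root_.map_sum _ _ _

theorem condExp_comp_snd_finsetSum_prod_ae_eq {α β ι : Type*} [MeasurableSpace α]
    [MeasurableSpace β] {S : Finset ι} {s : ι → Set α} {μ : ι → Measure α} {ν : ι → Measure β}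
    [∀ i, IsFiniteMeasure (μ i)] [∀ i, IsFiniteMeasure (ν i)]
    (hs : ∀ i ∈ S, MeasurableSet (s i)) (hS : (S : Set ι).PairwiseDisjoint s)
    (hμs : ∀ i ∈ S, ∀ᵐ x ∂μ i, x ∈ s i) {g : β → ℝ} (hg : ∀ i ∈ S, Integrable g (ν i)) :
    (∑ i ∈ S, (μ i).prod (ν i))[fun z => g z.2 | MeasurableSpace.comap Prod.fst inferInstance]
      =ᵐ[∑ i ∈ S, (μ i).prod (ν i)]
        fun z => ∑ i ∈ S, (s i).indicator (fun _ => ⨍ y, g y ∂ν i) z.1 := by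
  set G : α → ℝ := fun x => ∑ i ∈ S, (s i).indicator (fun _ => ⨍ y, g y ∂ν i) x
  have hG_meas : Measurable G :=
    Finset.measurable_sum _ fun i hi => measurable_const.indicator (hs i hi)
  have hG_int (ρ : Measure α) [IsFiniteMeasure ρ] : Integrable G ρ :=
    integrable_finsetSum _ fun i hi => (integrable_const _).indicator (hs i hi)
  have hG_block : ∀ i ∈ S, G =ᵐ[μ i] fun _ => ⨍ y, g y ∂ν i := fun i hi =>
    (hμs i hi).mono fun x hx => Finset.sum_indicator_const_of_mem hS _ hi hx
  refine (ae_eq_condExp_of_forall_setIntegral_eq measurable_fst.comap_le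
    (integrable_finsetSum_measure.2 fun i hi => (hg i hi).comp_snd _)
    (fun _ _ _ => ((hG_int _).comp_measurable measurable_fst).integrableOn) ?_
    (hG_meas.comp (comap_measurable _)).aestronglyMeasurable).symm
  rintro _ ⟨t, ht, rfl⟩ -
  simp_rw [Function.comp_apply, Measure.restrict_finsetSum, ← prod_univ,
    ← Measure.restrict_prod_eq_prod_univ]
  rw [integral_finsetSum_measure fun i _ => (hG_int _).comp_fst _,
    integral_finsetSum_measure fun i hi => (hg i hi).comp_snd _]
  refine Finset.sum_congr rfl fun i hi => ?_
  rw [integral_fun_fst, integral_fun_snd, integral_congr_ae (ae_restrict_of_ae (hG_block i hi)),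
    integral_const, ← measure_smul_average (ν i) g]
  simp only [smul_eq_mul, measureReal_restrict_apply_univ]
  ring

end MeasureTheory

section

noncomputable def cell (M i : ℕ) : Set ℝ := Ico ((i : ℝ) / M) ((i + 1 : ℕ) / M)

/-- The midpoint of the cell containing `u`; `0` outside `[0, 1)`. -/
noncomputable def cellMidpoint (M : ℕ) (u : ℝ) : ℝ :=
  ∑ i ∈ Finset.range M, (cell M i).indicator (fun _ => (2 * i + 1 : ℝ) / (2 * M)) u

variable {M : ℕ}

theorem monotone_div_natCast : Monotone fun n : ℕ => (n : ℝ) / M :=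
  fun _ _ h => div_le_div_of_nonneg_right (Nat.cast_le.2 h) M.cast_nonneg

instance (M i : ℕ) : IsFiniteMeasure (volume.restrict (cell M i)) := by
  rw [cell]
  infer_instance

theorem measurableSet_cell (i : ℕ) : MeasurableSet (cell M i) := measurableSet_Ico

theorem pairwiseDisjoint_cell : (Finset.range M : Set ℕ).PairwiseDisjoint (cell M) :=
  (monotone_div_natCast.pairwise_disjoint_on_Ico_succ).set_pairwise _

theorem biUnion_cell (hM : 0 < M) : ⋃ i ∈ Finset.range M, cell M i = Ico 0 1 := by
  simpa [cell, hM.ne'] using monotone_div_natCast (M := M) |>.biUnion_range_Ico M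

theorem cellMidpoint_of_mem {i : ℕ} (hi : i < M) {u : ℝ} (hu : u ∈ cell M i) :
    cellMidpoint M u = (2 * i + 1 : ℝ) / (2 * M) :=
  Finset.sum_indicator_const_of_mem pairwiseDisjoint_cell _ (Finset.mem_range.2 hi) hu

theorem volume_cell (hM : 0 < M) (i : ℕ) : volume (cell M i) = (M : ℝ≥0∞)⁻¹ := by
  rw [cell, Real.volume_Ico, Nat.cast_succ, ← sub_div, add_sub_cancel_left,
    ENNReal.ofReal_div_of_pos (Nat.cast_pos.2 hM), ENNReal.ofReal_one, ENNReal.ofReal_natCast,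
    one_div]

theorem natCast_mul_volume_cell (hM : 0 < M) (i : ℕ) : (M : ℝ≥0∞) * volume (cell M i) = 1 := by
  rw [volume_cell hM, ENNReal.mul_inv_cancel (Nat.cast_ne_zero.2 hM.ne') (ENNReal.natCast_ne_top M)]

theorem setAverage_cell (hM : 0 < M) (i : ℕ) :
    ⨍ x in cell M i, x = (2 * i + 1 : ℝ) / (2 * M) := by
  have hM' : (0 : ℝ) < M := Nat.cast_pos.2 hM
  rw [cell, setAverage_id_Ico (div_lt_div_of_pos_right (by push_cast; linarith) hM')]
  push_cast
  field_simp
  ring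

theorem sum_restrict_cell (hM : 0 < M) :
    ∑ i ∈ Finset.range M, volume.restrict (cell M i) = volume.restrict (Icc (0 : ℝ) 1) := by
  rw [Measure.restrict_congr_set Ico_ae_eq_Icc.symm, ← biUnion_cell hM,
    Measure.restrict_biUnion_finset pairwiseDisjoint_cell measurableSet_cell,
    Measure.sum_coe_finset (Finset.range M) fun i => volume.restrict (cell M i)]

/- The weights are taken in `ℝ≥0` rather than `ℝ≥0∞` so that the blocks are
`IsFiniteMeasure` instances. -/
theorem QM_eq_sum : QM M = ∑ i ∈ Finset.range M,
    ((M : ℝ≥0) • volume.restrict (cell M i)).prod (volume.restrict (cell M i)) := by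
  have hdensity : (fun x => ENNReal.ofReal (densityg M x)) =
      ∑ i ∈ Finset.range M, (cell M i ×ˢ cell M i).indicator fun _ => (M : ℝ≥0∞) := by
    funext x
    rw [densityg, ENNReal.ofReal_mul M.cast_nonneg, ENNReal.ofReal_natCast,
      ENNReal.ofReal_sum_of_nonneg fun i _ => indicator_nonneg (fun _ _ => zero_le_one) _,
      Finset.mul_sum, Finset.sum_apply]
    refine Finset.sum_congr rfl fun i _ => ?_
    simp only [cell, indicator_apply]
    split_ifs <;> simp
  rw [QM, hdensity, withDensity_finsetSum _ fun i _ => measurable_const.indicator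
    ((measurableSet_cell i).prod (measurableSet_cell i))]
  refine Finset.sum_congr rfl fun i _ => ?_
  rw [withDensity_indicator ((measurableSet_cell i).prod (measurableSet_cell i)), withDensity_const,
    Measure.volume_eq_prod, ← Measure.prod_restrict, Measure.prod_smul_left, ENNReal.smul_def,
    ENNReal.coe_natCast]

theorem map_fst_QM (hM : 0 < M) :
    (QM M).map Prod.fst = volume.restrict (Icc 0 1) := by
  rw [QM_eq_sum, Measure.map_finset_sum measurable_fst.aemeasurable, ← sum_restrict_cell hM]
  refine Finset.sum_congr rfl fun i _ => ?_
  rw [Measure.map_fst_prod, Measure.restrict_apply_univ, ENNReal.smul_def, smul_smul,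
    ENNReal.coe_natCast, mul_comm, natCast_mul_volume_cell hM, one_smul]

theorem map_snd_QM (hM : 0 < M) :
    (QM M).map Prod.snd = volume.restrict (Icc 0 1) := by
  rw [QM_eq_sum, Measure.map_finset_sum measurable_snd.aemeasurable, ← sum_restrict_cell hM]
  refine Finset.sum_congr rfl fun i _ => ?_
  rw [Measure.map_snd_prod, Measure.smul_apply, Measure.restrict_apply_univ, ENNReal.smul_def,
    ENNReal.coe_natCast, smul_eq_mul, natCast_mul_volume_cell hM, one_smul]

theorem condExp_snd_QM (hM : 0 < M) :
    (QM M)[fun x : ℝ × ℝ => x.2 | MeasurableSpace.comap Prod.fst inferInstance]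
      =ᵐ[QM M] fun x => cellMidpoint M x.1 := by
  have h := condExp_comp_snd_finsetSum_prod_ae_eq (S := Finset.range M)
    (μ := fun i => (M : ℝ≥0) • volume.restrict (cell M i))
    (ν := fun i => volume.restrict (cell M i)) (g := fun y => y)
    (fun i _ => measurableSet_cell i) pairwiseDisjoint_cell
    (fun i _ => Measure.ae_smul_measure (ae_restrict_mem (measurableSet_cell i)) _)
    (fun i _ => continuous_id.integrableOn_Icc.mono_set Ico_subset_Icc_self)
  simp_rw [setAverage_cell hM] at h
  rwa [← QM_eq_sum] at h

theorem measurable_cellMidpoint : Measurable (cellMidpoint M) :=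
  Finset.measurable_sum _ fun i _ => measurable_const.indicator (measurableSet_cell i)

theorem integrable_cellMidpoint (ρ : Measure ℝ) [IsFiniteMeasure ρ] :
    Integrable (cellMidpoint M) ρ :=
  integrable_finsetSum _ fun i _ => (integrable_const _).indicator (measurableSet_cell i)

theorem setIntegral_cell_abs_cellMidpoint_sub {i : ℕ} (hi : i < M) :
    ∫ u in cell M i, |cellMidpoint M u - u| = 1 / (4 * M ^ 2) := by
  have hM : (M : ℝ) ≠ 0 := Nat.cast_ne_zero.2 (by omega)
  have hmid : ∀ u ∈ cell M i,
      |cellMidpoint M u - u| = |((i : ℝ) / M + ((i + 1 : ℕ) : ℝ) / M) / 2 - u| := fun u hu => by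
    rw [cellMidpoint_of_mem hi hu]
    congr 2
    push_cast
    field_simp
    ring
  rw [setIntegral_congr_fun (measurableSet_cell i) hmid, cell,
    setIntegral_Ico_abs_midpoint_sub (monotone_div_natCast i.le_succ)]
  push_cast
  field_simp
  ring

theorem integral_abs_cellMidpoint_sub (hM : 0 < M) :
    ∫ x, |cellMidpoint M x.1 - x.1| ∂QM M = 1 / (4 * M) := by
  have hint : ∀ i ∈ Finset.range M,
      Integrable (fun u => |cellMidpoint M u - u|) (volume.restrict (cell M i)) := fun i _ =>
    ((integrable_cellMidpoint _).sub
      (continuous_id.integrableOn_Icc.mono_set Ico_subset_Icc_self)).abs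
  calc ∫ x, |cellMidpoint M x.1 - x.1| ∂QM M
      = ∫ u, |cellMidpoint M u - u| ∂(QM M).map Prod.fst :=
        (integral_map measurable_fst.aemeasurable
          (measurable_cellMidpoint.sub measurable_id).abs.aestronglyMeasurable).symm
    _ = ∑ i ∈ Finset.range M, ∫ u in cell M i, |cellMidpoint M u - u| := by
        rw [map_fst_QM hM, ← sum_restrict_cell hM, integral_finsetSum_measure hint]
    _ = 1 / (4 * M) := by
        rw [Finset.sum_congr rfl fun i hi =>
          setIntegral_cell_abs_cellMidpoint_sub (Finset.mem_range.1 hi),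
          Finset.sum_const, Finset.card_range, nsmul_eq_mul]
        field_simp

end

/-- both marginals of `Q_M` are Lebesgue measure on `[0,1]`,
`E_{Q_M}[S₂|S₁ = x] = (2i+1)/(2M)` for `x ∈ [i/M,(i+1)/M)`, and
`E_{Q_M}[|E_{Q_M}[S₂|S₁] − S₁|] = 1/(4M)`. -/
theorem stmt16 (M : ℕ) (hM : 0 < M) :
    (QM M).map Prod.fst = (volume : Measure ℝ).restrict (Set.Icc 0 1) ∧
    (QM M).map Prod.snd = (volume : Measure ℝ).restrict (Set.Icc 0 1) ∧
    ((QM M)[fun x : ℝ × ℝ => x.2 | MeasurableSpace.comap Prod.fst inferInstance])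
      =ᵐ[QM M] (fun x : ℝ × ℝ => ∑ i ∈ Finset.range M,
        Set.indicator (Set.Ico ((i : ℝ) / M) ((i + 1 : ℕ) / M))
          (fun _ => (2 * i + 1 : ℝ) / (2 * M)) x.1) ∧
    (∫ x, |((QM M)[fun x : ℝ × ℝ => x.2 |
        MeasurableSpace.comap Prod.fst inferInstance]) x - x.1| ∂(QM M))
      = 1 / (4 * M) := by
  have hcondExp := condExp_snd_QM hM
  refine ⟨map_fst_QM hM, map_snd_QM hM, hcondExp, ?_⟩
  rw [← integral_abs_cellMidpoint_sub hM]
  exact integral_congr_ae (hcondExp.mono fun x hx => by simp only [hx])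
end
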